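/- Let s ≻ t be ground terms and C a ground clause such that every term r occurring in C satisfies t ⪰ r. Then, for the rewrite systems I_s and I_t of the model construction, I_s ⊨ C if and only if I_t ⊨ C. -/

import Mathlib

set_option autoImplicit false

namespace PaRC

/-- First-order terms over a signature `F` with arity function `ar`;
variables are natural numbers. -/
inductive Trm (F : Type) (ar : F → ℕ) : Type
  | var : ℕ → Trm F ar
  | app : (f : F) → (Fin (ar f) → Trm F ar) → Trm F ar

variable {F : Type} {ar : F → ℕ}

/-- Substitutions. -/
abbrev Subst (F : Type) (ar : F → ℕ) : Type := ℕ → Trm F ar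

/-- Applying a substitution to a term. -/
def Trm.subst (σ : Subst F ar) : Trm F ar → Trm F ar
  | .var x => σ x
  | .app f a => .app f (fun i => (a i).subst σ)

/-- Composition of substitutions. -/
def Subst.comp (σ τ : Subst F ar) : Subst F ar := fun x => Trm.subst τ (σ x)

/-- A term is ground if it contains no variables. -/
def Trm.IsGround : Trm F ar → Prop
  | .var _ => False
  | .app _ a => ∀ i, (a i).IsGround

/-- Free variables of a term. -/
def Trm.fvars : Trm F ar → Set ℕ
  | .var x => {x}
  | .app _ a => ⋃ i, (a i).fvars

/-- Subterm at a position (list of argument indices). -/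
def Trm.atPos : Trm F ar → List ℕ → Option (Trm F ar)
  | t, [] => some t
  | .var _, _ :: _ => none
  | .app f a, i :: p => if h : i < ar f then Trm.atPos (a ⟨i, h⟩) p else none

/-- Replace the subterm at a given position. -/
def Trm.replace : Trm F ar → List ℕ → Trm F ar → Trm F ar
  | _, [], u => u
  | .var x, _ :: _, _ => .var x
  | .app f a, i :: p, u =>
      if h : i < ar f then
        .app f (Function.update a ⟨i, h⟩ (Trm.replace (a ⟨i, h⟩) p u))
      else .app f a

/-- An equality literal: polarity together with the two sides. -/
structure Lit (F : Type) (ar : F → ℕ) : Type where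
  pos : Bool
  lhs : Trm F ar
  rhs : Trm F ar

def Lit.subst (σ : Subst F ar) (L : Lit F ar) : Lit F ar :=
  ⟨L.pos, Trm.subst σ L.lhs, Trm.subst σ L.rhs⟩

def Lit.IsGround (L : Lit F ar) : Prop := L.lhs.IsGround ∧ L.rhs.IsGround

def Lit.fvars (L : Lit F ar) : Set ℕ := L.lhs.fvars ∪ L.rhs.fvars

/-- A clause is a (finite) multiset of literals. -/
abbrev Clause (F : Type) (ar : F → ℕ) : Type := Multiset (Lit F ar)

def Clause.subst (σ : Subst F ar) (C : Clause F ar) : Clause F ar := C.map (Lit.subst σ)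

def Clause.IsGround (C : Clause F ar) : Prop := ∀ L ∈ C, L.IsGround

def Clause.fvars (C : Clause F ar) : Set ℕ := {x | ∃ L ∈ C, x ∈ L.fvars}

/-- A substitution is grounding for a clause if the instance is ground. -/
def GroundingFor (θ : Subst F ar) (C : Clause F ar) : Prop :=
  Clause.IsGround (Clause.subst θ C)

/-- A term occurs in a clause if it is a subterm of a side of one of its literals. -/
def OccursIn (u : Trm F ar) (C : Clause F ar) : Prop :=
  ∃ L ∈ C, ∃ p, Trm.atPos L.lhs p = some u ∨ Trm.atPos L.rhs p = some u

/-! ### Semantics: Σ-algebras, entailment and satisfiability -/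

/-- A Σ-algebra (first-order structure for the purely equational signature). -/
structure Alg (F : Type) (ar : F → ℕ) : Type 1 where
  carrier : Type
  nonempty : Nonempty carrier
  interp : (f : F) → (Fin (ar f) → carrier) → carrier

def Trm.eval (A : Alg F ar) (v : ℕ → A.carrier) : Trm F ar → A.carrier
  | .var x => v x
  | .app f a => A.interp f (fun i => (a i).eval A v)

def Lit.holds (A : Alg F ar) (v : ℕ → A.carrier) (L : Lit F ar) : Prop :=
  if L.pos then L.lhs.eval A v = L.rhs.eval A v else L.lhs.eval A v ≠ L.rhs.eval A v

/-- A clause is true in an algebra if it is true under every valuation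
(variables are implicitly universally quantified). -/
def Clause.validIn (A : Alg F ar) (C : Clause F ar) : Prop :=
  ∀ v : ℕ → A.carrier, ∃ L ∈ C, Lit.holds A v L

/-- First-order entailment between a set of clauses and a clause. -/
def Entails (S : Set (Clause F ar)) (D : Clause F ar) : Prop :=
  ∀ A : Alg F ar, (∀ C ∈ S, Clause.validIn A C) → Clause.validIn A D

/-- Satisfiability of a set of clauses. -/
def Satisfiable (S : Set (Clause F ar)) : Prop :=
  ∃ A : Alg F ar, ∀ C ∈ S, Clause.validIn A C

/-! ### Simplification orders and their bag extensions -/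

/-- A simplification order: a reduction ordering that is total on ground terms
and has the subterm property. -/
structure SimpOrd (F : Type) (ar : F → ℕ) : Type where
  gt : Trm F ar → Trm F ar → Prop
  trans : ∀ {s t u : Trm F ar}, gt s t → gt t u → gt s u
  irrefl : ∀ s : Trm F ar, ¬ gt s s
  wf : WellFounded (fun s t : Trm F ar => gt t s)
  substStable : ∀ (σ : Subst F ar) {s t : Trm F ar}, gt s t →
    gt (Trm.subst σ s) (Trm.subst σ t)
  ctxStable : ∀ (s : Trm F ar) (p : List ℕ) {l r : Trm F ar}, (Trm.atPos s p).isSome →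
    gt l r → gt (Trm.replace s p l) (Trm.replace s p r)
  subterm : ∀ {s t : Trm F ar} (p : List ℕ), Trm.atPos s p = some t → s ≠ t → gt s t
  totalGround : ∀ {s t : Trm F ar}, s.IsGround → t.IsGround → s ≠ t → gt s t ∨ gt t s

/-- Bag (Dershowitz–Manna multiset) extension of an ordering: `N > M`. -/
def MultGT {α : Type} (r : α → α → Prop) (N M : Multiset α) : Prop :=
  ∃ X Y Z : Multiset α, X ≠ 0 ∧ N = Z + X ∧ M = Z + Y ∧ ∀ y ∈ Y, ∃ x ∈ X, r x y

/-- The multiset of terms associated to a literal: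
`{s, t}` for `s ≈ t` and `{s, s, t, t}` for `s ≉ t`. -/
def Lit.ms (L : Lit F ar) : Multiset (Trm F ar) :=
  if L.pos then {L.lhs, L.rhs} else {L.lhs, L.lhs, L.rhs, L.rhs}

/-- The induced ordering on literals. -/
def litGT (O : SimpOrd F ar) (L M : Lit F ar) : Prop := MultGT O.gt L.ms M.ms

/-- The induced ordering on clauses. -/
def clauseGT (O : SimpOrd F ar) (C D : Clause F ar) : Prop := MultGT (litGT O) C D

def clauseGE (O : SimpOrd F ar) (C D : Clause F ar) : Prop := clauseGT O C D ∨ C = D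

/-- A ground clause `D` is redundant w.r.t. a set `S` of ground clauses if it is
entailed by finitely many clauses of `S` that are all smaller than `D`. -/
def Redundant (O : SimpOrd F ar) (S : Set (Clause F ar)) (D : Clause F ar) : Prop :=
  ∃ Cs : List (Clause F ar), (∀ C ∈ Cs, C ∈ S) ∧
    Entails {C | C ∈ Cs} D ∧ ∀ C ∈ Cs, clauseGT O D C

/-! ### Redundancy formulas and partial clauses -/

/-- Redundancy formulas: first-order formulas over the term algebra extended with
the interpreted predicates `≻` (the simplification order) and equality. -/
inductive RForm (F : Type) (ar : F → ℕ) : Type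
  | falsum : RForm F ar
  | verum : RForm F ar
  | eq (s t : Trm F ar) : RForm F ar
  | gt (s t : Trm F ar) : RForm F ar
  | and (a b : RForm F ar) : RForm F ar
  | or (a b : RForm F ar) : RForm F ar
  | ex (x : ℕ) (a : RForm F ar) : RForm F ar

def RForm.subst (σ : Subst F ar) : RForm F ar → RForm F ar
  | .falsum => .falsum
  | .verum => .verum
  | .eq s t => .eq (Trm.subst σ s) (Trm.subst σ t)
  | .gt s t => .gt (Trm.subst σ s) (Trm.subst σ t)
  | .and a b => .and (a.subst σ) (b.subst σ)
  | .or a b => .or (a.subst σ) (b.subst σ)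
  | .ex x a => .ex x (a.subst fun y => if y = x then Trm.var x else σ y)

def RForm.fvars : RForm F ar → Set ℕ
  | .falsum => ∅
  | .verum => ∅
  | .eq s t => s.fvars ∪ t.fvars
  | .gt s t => s.fvars ∪ t.fvars
  | .and a b => a.fvars ∪ b.fvars
  | .or a b => a.fvars ∪ b.fvars
  | .ex x a => a.fvars \ {x}

/-- Truth of a redundancy formula in the extended term algebra `T_R(Σ)`,
under a valuation `v` mapping variables to (ground) terms. -/
def RForm.realize (O : SimpOrd F ar) (v : Subst F ar) : RForm F ar → Prop
  | .falsum => False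
  | .verum => True
  | .eq s t => Trm.subst v s = Trm.subst v t
  | .gt s t => O.gt (Trm.subst v s) (Trm.subst v t)
  | .and a b => a.realize O v ∧ b.realize O v
  | .or a b => a.realize O v ∨ b.realize O v
  | .ex x a => ∃ g : Trm F ar, g.IsGround ∧ a.realize O (Function.update v x g)

/-- `σ ⊨ R`: every ground instance of `Rσ` is true in `T_R(Σ)`. -/
def RSat (O : SimpOrd F ar) (σ : Subst F ar) (R : RForm F ar) : Prop :=
  ∀ v : Subst F ar, (∀ x, (v x).IsGround) → RForm.realize O v (RForm.subst σ R)

theorem RForm.falsum_fvars_sub (s : Set ℕ) : RForm.fvars (.falsum : RForm F ar) ⊆ s := by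
  intro x hx; simp [RForm.fvars] at hx

/-- `s ⪰ t` as a redundancy formula. -/
def RForm.ge (s t : Trm F ar) : RForm F ar := .or (.gt s t) (.eq s t)

/-- `(s ≐ t) ⪰ l` as a redundancy formula. -/
def Lit.geForm (L : Lit F ar) (l : Trm F ar) : RForm F ar :=
  .or (RForm.ge L.lhs l) (RForm.ge L.rhs l)

/-- `(s ≐ t) ≻ l` as a redundancy formula. -/
def Lit.gtForm (L : Lit F ar) (l : Trm F ar) : RForm F ar :=
  .or (.gt L.lhs l) (.gt L.rhs l)

/-- `C ⪰ l` as a redundancy formula (disjunction over the literals of `C`). -/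
noncomputable def Clause.geForm (C : Clause F ar) (l : Trm F ar) : RForm F ar :=
  C.toList.foldr (fun L acc => RForm.or (Lit.geForm L l) acc) RForm.falsum

/-- `C ≻ l` as a redundancy formula (disjunction over the literals of `C`). -/
noncomputable def Clause.gtForm (C : Clause F ar) (l : Trm F ar) : RForm F ar :=
  C.toList.foldr (fun L acc => RForm.or (Lit.gtForm L l) acc) RForm.falsum

/-- A partial clause `C ⋈ R`: a clause together with a redundancy formula all of
whose free variables occur in the clause. -/
structure PClause (F : Type) (ar : F → ℕ) : Type where
  cl : Clause F ar
  rf : RForm F ar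
  hfv : RForm.fvars rf ⊆ Clause.fvars cl

/-- `⌊C ⋈ R⌋`: the ground instances `Cθ` with `θ ⊭ R`. -/
def pgnd (O : SimpOrd F ar) (pc : PClause F ar) : Set (Clause F ar) :=
  {D | ∃ θ : Subst F ar, D = Clause.subst θ pc.cl ∧ Clause.IsGround D ∧ ¬ RSat O θ pc.rf}

/-- `⌊S⌋` for a set of partial clauses. -/
def gndS (O : SimpOrd F ar) (S : Set (PClause F ar)) : Set (Clause F ar) :=
  ⋃ pc ∈ S, pgnd O pc

/-- `S*`: all ground instances of clauses occurring in `S`. -/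
def gstar (S : Set (PClause F ar)) : Set (Clause F ar) :=
  {D | ∃ pc ∈ S, ∃ θ : Subst F ar, D = Clause.subst θ pc.cl ∧ Clause.IsGround D}

/-! ### The PaRC calculus -/

def IsUnifier (σ : Subst F ar) (s t : Trm F ar) : Prop := Trm.subst σ s = Trm.subst σ t

def IsMGU (σ : Subst F ar) (s t : Trm F ar) : Prop :=
  IsUnifier σ s t ∧ ∀ η : Subst F ar, IsUnifier η s t → ∃ μ : Subst F ar, η = Subst.comp σ μ

/-- A literal selection function satisfying the standard condition w.r.t. `≻`. -/
structure SelFun (F : Type) (ar : F → ℕ) (O : SimpOrd F ar) : Type where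
  sel : Clause F ar → Set (Lit F ar)
  subset : ∀ C : Clause F ar, sel C ⊆ {L | L ∈ C}
  nonemptyOn : ∀ C : Clause F ar, C ≠ 0 → (sel C).Nonempty
  standard : ∀ C : Clause F ar,
    (∃ L ∈ sel C, L.pos = false) ∨ ∀ L ∈ sel C, ∀ M ∈ C, ¬ litGT O M L

/-- The inference rules of the PaRC calculus on partial clauses.
`Inf O sel prems σ concl` means: there is a PaRC inference with premises `prems`,
most general unifier `σ`, and conclusion `concl`; selected literals are the displayed
first literals of the premises. -/
inductive Inf (O : SimpOrd F ar) (sel : SelFun F ar O) :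
    List (PClause F ar) → Subst F ar → Clause F ar → Prop
  | sup {l r : Trm F ar} {C₁ : Clause F ar} {R₁ : RForm F ar}
      {h₁ : RForm.fvars R₁ ⊆ Clause.fvars (Lit.mk true l r ::ₘ C₁)}
      {b : Bool} {s t : Trm F ar} {C₂ : Clause F ar} {R₂ : RForm F ar}
      {h₂ : RForm.fvars R₂ ⊆ Clause.fvars (Lit.mk b s t ::ₘ C₂)}
      {p : List ℕ} {l' : Trm F ar} {σ : Subst F ar} :
      Trm.atPos s p = some l' →
      (∀ x, l' ≠ .var x) →
      IsMGU σ l l' →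
      Lit.mk true l r ∈ sel.sel (Lit.mk true l r ::ₘ C₁) →
      Lit.mk b s t ∈ sel.sel (Lit.mk b s t ::ₘ C₂) →
      ¬ RSat O σ (RForm.ge r l) →
      ¬ RSat O σ (RForm.ge t s) →
      ¬ RSat O σ (Clause.geForm C₁ l) →
      (b = true → ¬ RSat O σ (Clause.geForm C₂ s)) →
      ¬ RSat O σ R₁ →
      ¬ RSat O σ R₂ →
      Inf O sel [⟨Lit.mk true l r ::ₘ C₁, R₁, h₁⟩, ⟨Lit.mk b s t ::ₘ C₂, R₂, h₂⟩] σ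
        (Clause.subst σ (Lit.mk b (Trm.replace s p r) t ::ₘ (C₁ + C₂)))
  | eqres {s t : Trm F ar} {C : Clause F ar} {R : RForm F ar}
      {h : RForm.fvars R ⊆ Clause.fvars (Lit.mk false s t ::ₘ C)} {σ : Subst F ar} :
      IsMGU σ s t →
      Lit.mk false s t ∈ sel.sel (Lit.mk false s t ::ₘ C) →
      ¬ RSat O σ R →
      Inf O sel [⟨Lit.mk false s t ::ₘ C, R, h⟩] σ (Clause.subst σ C)
  | eqfac {s t s' t' : Trm F ar} {C : Clause F ar} {R : RForm F ar}
      {h : RForm.fvars R ⊆ Clause.fvars (Lit.mk true s t ::ₘ Lit.mk true s' t' ::ₘ C)}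
      {σ : Subst F ar} :
      IsMGU σ s s' →
      Lit.mk true s t ∈ sel.sel (Lit.mk true s t ::ₘ Lit.mk true s' t' ::ₘ C) →
      Lit.mk true s' t' ∈ sel.sel (Lit.mk true s t ::ₘ Lit.mk true s' t' ::ₘ C) →
      ¬ RSat O σ (RForm.ge t s) →
      ¬ RSat O σ (RForm.gt t' t) →
      ¬ RSat O σ (Clause.gtForm C s) →
      ¬ RSat O σ R →
      Inf O sel [⟨Lit.mk true s t ::ₘ Lit.mk true s' t' ::ₘ C, R, h⟩] σ
        (Clause.subst σ (Lit.mk true s t ::ₘ Lit.mk false t t' ::ₘ C))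

/-! ### Saturation -/

/-- A saturation w.r.t. the PaRC calculus: `S 0` consists of partial clauses of the
form `C ⋈ ⊥`, and each step is either an inference step or a redundancy step. -/
structure Saturation (O : SimpOrd F ar) (sel : SelFun F ar O) : Type where
  S : ℕ → Set (PClause F ar)
  init : ∀ pc ∈ S 0, pc.rf = RForm.falsum
  step : ∀ i : ℕ,
    (∃ (prems : List (PClause F ar)) (σ : Subst F ar) (concl : Clause F ar),
        (∀ pc ∈ prems, pc ∈ S i) ∧ Inf O sel prems σ concl ∧
        S (i + 1) = S i ∪ {⟨concl, RForm.falsum, RForm.falsum_fvars_sub _⟩}) ∨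
    (∃ pc ∈ S i, ∃ (R₂ : RForm F ar)
        (h : RForm.fvars (RForm.or pc.rf R₂) ⊆ Clause.fvars pc.cl),
        (∀ θ : Subst F ar, GroundingFor θ pc.cl → RSat O θ R₂ →
          Redundant O (gstar (S i)) (Clause.subst θ pc.cl)) ∧
        S (i + 1) = (S i \ {pc}) ∪ {⟨pc.cl, RForm.or pc.rf R₂, h⟩})

variable {O : SimpOrd F ar} {sel : SelFun F ar O}

/-- `S_ω = ⋃ i, S i`. -/
def Saturation.Somega (𝕊 : Saturation O sel) : Set (PClause F ar) := ⋃ i, 𝕊.S i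

/-- The limit `⋃_{i≥0} ⋂_{j≥i} ⌊S_j⌋` of a saturation. -/
def Saturation.limit (𝕊 : Saturation O sel) : Set (Clause F ar) :=
  ⋃ i : ℕ, ⋂ j : ℕ, ⋂ (_ : j ≥ i), gndS O (𝕊.S j)

/-- A ground clause is persistent if it belongs to the limit. -/
def Saturation.Persistent (𝕊 : Saturation O sel) (C : Clause F ar) : Prop := C ∈ 𝕊.limit

/-- Fairness of a saturation. -/
def Saturation.Fair (𝕊 : Saturation O sel) : Prop :=
  ∀ (prems : List (PClause F ar)) (σ : Subst F ar) (concl : Clause F ar) (ρ : Subst F ar),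
    Inf O sel prems σ concl →
    (∀ pc ∈ prems, 𝕊.Persistent (Clause.subst ρ (Clause.subst σ pc.cl))) →
    ∃ i : ℕ, (⟨concl, RForm.falsum, RForm.falsum_fvars_sub _⟩ : PClause F ar) ∈ 𝕊.S i

/-! ### Ground rewrite systems and the model construction -/

/-- One-step ground rewriting with a set of (ground) rewrite rules. -/
def Rw (I : Set (Trm F ar × Trm F ar)) (s t : Trm F ar) : Prop :=
  ∃ lr ∈ I, ∃ p : List ℕ, Trm.atPos s p = some lr.1 ∧ t = Trm.replace s p lr.2

def RwStar (I : Set (Trm F ar × Trm F ar)) : Trm F ar → Trm F ar → Prop :=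
  Relation.ReflTransGen (Rw I)

/-- A term is irreducible (a normal form) in `I`. -/
def NormalForm (I : Set (Trm F ar × Trm F ar)) (t : Trm F ar) : Prop := ∀ u, ¬ Rw I t u

/-- `s` and `t` have the same normal form in `I`. -/
def SameNF (I : Set (Trm F ar × Trm F ar)) (s t : Trm F ar) : Prop :=
  ∃ u : Trm F ar, RwStar I s u ∧ RwStar I t u ∧ NormalForm I u

/-- Truth of a ground clause in the interpretation given by a rewrite system. -/
def TrueIn (I : Set (Trm F ar × Trm F ar)) (C : Clause F ar) : Prop :=
  ∃ L ∈ C, if L.pos then SameNF I L.lhs L.rhs else ¬ SameNF I L.lhs L.rhs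

def NonOverlapping (I : Set (Trm F ar × Trm F ar)) : Prop :=
  ∀ lr ∈ I, ∀ lr' ∈ I, lr ≠ lr' → ∀ p : List ℕ, Trm.atPos (Prod.fst lr) p ≠ some (Prod.fst lr')

def Terminating (I : Set (Trm F ar × Trm F ar)) : Prop :=
  WellFounded (fun s t : Trm F ar => Rw I t s)

def Confluent (I : Set (Trm F ar × Trm F ar)) : Prop :=
  ∀ a b c : Trm F ar, RwStar I a b → RwStar I a c → ∃ d, RwStar I b d ∧ RwStar I c d

/-- The productivity condition of the model construction: there is a partial clause
`(l₁ ≈ r₁ ∨ C ⋈ R) ∈ S_ω` (with `l₁ ≈ r₁` selected) and a grounding substitution `θ`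
with `l₁θ = l`, `l₁θ ≻ r₁θ`, `l₁θ ≻ Cθ`, `θ ⊭ R`, `I_{≺l} ⊭ Cθ`, producing the rule
`l → rr` where `rr = r₁θ`. -/
def ProducesWith (O : SimpOrd F ar) (sel : SelFun F ar O) (Sω : Set (PClause F ar))
    (Ipre : Set (Trm F ar × Trm F ar)) (l rr : Trm F ar) : Prop :=
  ∃ (l₁ r₁ : Trm F ar) (C : Clause F ar) (R : RForm F ar)
    (h : RForm.fvars R ⊆ Clause.fvars (Lit.mk true l₁ r₁ ::ₘ C)) (θ : Subst F ar),
    (⟨Lit.mk true l₁ r₁ ::ₘ C, R, h⟩ : PClause F ar) ∈ Sω ∧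
    Lit.mk true l₁ r₁ ∈ sel.sel (Lit.mk true l₁ r₁ ::ₘ C) ∧
    GroundingFor θ (Lit.mk true l₁ r₁ ::ₘ C) ∧
    Trm.subst θ l₁ = l ∧
    O.gt (Trm.subst θ l₁) (Trm.subst θ r₁) ∧
    (∀ L ∈ Clause.subst θ C, O.gt (Trm.subst θ l₁) L.lhs ∧ O.gt (Trm.subst θ l₁) L.rhs) ∧
    ¬ RSat O θ R ∧
    ¬ TrueIn Ipre (Clause.subst θ C) ∧
    rr = Trm.subst θ r₁

/-- The rewrite system `I_l` of the model construction, defined by well-founded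
recursion on `≻`. -/
noncomputable def Interp (O : SimpOrd F ar) (sel : SelFun F ar O)
    (Sω : Set (PClause F ar)) : Trm F ar → Set (Trm F ar × Trm F ar) :=
  WellFounded.fix (C := fun _ => Set (Trm F ar × Trm F ar)) O.wf
    (fun l Irec =>
      let Ipre : Set (Trm F ar × Trm F ar) := ⋃ (r : Trm F ar), ⋃ (h : O.gt l r), Irec r h
      letI := Classical.propDecidable
      if h : NormalForm Ipre l ∧ ∃ rr, ProducesWith O sel Sω Ipre l rr then
        Ipre ∪ {(l, h.2.choose)}
      else Ipre)

/-- The rewrite system `I_{≺l}` of the model construction. -/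
noncomputable def IPre (O : SimpOrd F ar) (sel : SelFun F ar O)
    (Sω : Set (PClause F ar)) (l : Trm F ar) : Set (Trm F ar × Trm F ar) :=
  ⋃ (r : Trm F ar), ⋃ (_ : O.gt l r), Interp O sel Sω r

/-- The rewrite system `I_ω = ⋃_l I_l` of the model construction. -/
noncomputable def IOmega (O : SimpOrd F ar) (sel : SelFun F ar O)
    (Sω : Set (PClause F ar)) : Set (Trm F ar × Trm F ar) :=
  ⋃ (l : Trm F ar), Interp O sel Sω l

/-! All rules of `I_s` whose left-hand side is `⪯ t` already belong to `I_t`, and every rule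
is oriented by `≻`, so rewriting starting from a term `⪯ t` never leaves the terms `⪯ t`.
Along such terms `I_s` and `I_t` therefore perform the same rewrite steps, have the same
normal forms, and agree on every literal of `C`. -/

def SimpOrd.ge (O : SimpOrd F ar) (s t : Trm F ar) : Prop := O.gt s t ∨ s = t

theorem SimpOrd.ge_trans {s t u : Trm F ar} (hst : O.ge s t) (htu : O.ge t u) : O.ge s u := by
  rcases hst with hst | rfl
  · rcases htu with htu | rfl
    · exact Or.inl (O.trans hst htu)
    · exact Or.inl hst
  · exact htu

theorem Trm.atPos_nil (u : Trm F ar) : Trm.atPos u [] = some u := by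
  cases u <;> rfl

theorem SimpOrd.ge_of_atPos {u a : Trm F ar} {p : List ℕ} (h : Trm.atPos u p = some a) :
    O.ge u a := by
  by_cases hua : u = a
  · exact Or.inr hua
  · exact Or.inl (O.subterm p h hua)

theorem Trm.replace_self_of_atPos :
    ∀ (u : Trm F ar) (p : List ℕ) {a : Trm F ar}, Trm.atPos u p = some a → Trm.replace u p a = u
  | _, [], _, h => by
      rw [Trm.atPos_nil, Option.some_inj] at h
      simp [Trm.replace, h]
  | .var _, _ :: _, _, h => by simp [Trm.atPos] at h
  | .app f b, i :: p, a, h => by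
      simp only [Trm.atPos] at h
      split at h
      · next hi =>
          simp only [Trm.replace, dif_pos hi]
          rw [Trm.replace_self_of_atPos _ _ h, Function.update_eq_self]
      · simp at h

section Rewriting

variable {I J : Set (Trm F ar × Trm F ar)}

def Decreasing (O : SimpOrd F ar) (I : Set (Trm F ar × Trm F ar)) : Prop :=
  ∀ lr ∈ I, O.gt lr.1 lr.2

theorem Rw.mono (hIJ : I ⊆ J) {u v : Trm F ar} (h : Rw I u v) : Rw J u v := by
  obtain ⟨lr, hlr, p, hp, rfl⟩ := h
  exact ⟨lr, hIJ hlr, p, hp, rfl⟩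

theorem Rw.gt_of_decreasing (hI : Decreasing O I) {u v : Trm F ar} (h : Rw I u v) :
    O.gt u v := by
  obtain ⟨lr, hlr, p, hp, rfl⟩ := h
  have hctx := O.ctxStable u p (by rw [hp]; rfl) (hI lr hlr)
  rwa [Trm.replace_self_of_atPos u p hp] at hctx

theorem RwStar.ge_of_decreasing (hI : Decreasing O I) {t u v : Trm F ar} (hu : O.ge t u)
    (h : RwStar I u v) : O.ge t v := by
  induction h with
  | refl => exact hu
  | tail _ hstep ih => exact O.ge_trans ih (Or.inl (hstep.gt_of_decreasing hI))

theorem rw_iff_of_restrict {t u : Trm F ar} (hJI : J ⊆ I)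
    (hIJ : ∀ lr ∈ I, O.ge t lr.1 → lr ∈ J) (hu : O.ge t u) (v : Trm F ar) :
    Rw I u v ↔ Rw J u v := by
  refine ⟨?_, Rw.mono hJI⟩
  rintro ⟨lr, hlr, p, hp, rfl⟩
  exact ⟨lr, hIJ lr hlr (O.ge_trans hu (O.ge_of_atPos hp)), p, hp, rfl⟩

theorem normalForm_iff_of_restrict {t u : Trm F ar} (hJI : J ⊆ I)
    (hIJ : ∀ lr ∈ I, O.ge t lr.1 → lr ∈ J) (hu : O.ge t u) :
    NormalForm I u ↔ NormalForm J u :=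
  forall_congr' fun v => not_congr (rw_iff_of_restrict hJI hIJ hu v)

theorem rwStar_iff_of_restrict {t u v : Trm F ar} (hI : Decreasing O I) (hJI : J ⊆ I)
    (hIJ : ∀ lr ∈ I, O.ge t lr.1 → lr ∈ J) (hu : O.ge t u) :
    RwStar I u v ↔ RwStar J u v := by
  refine ⟨fun h => ?_, Relation.ReflTransGen.mono (fun _ _ => Rw.mono hJI) _ _⟩
  induction h with
  | refl => exact .refl
  | @tail w _ hw hstep ih =>
      exact ih.tail ((rw_iff_of_restrict hJI hIJ (RwStar.ge_of_decreasing hI hu hw) _).1 hstep)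

theorem sameNF_iff_of_restrict {t a b : Trm F ar} (hI : Decreasing O I) (hJI : J ⊆ I)
    (hIJ : ∀ lr ∈ I, O.ge t lr.1 → lr ∈ J) (ha : O.ge t a) (hb : O.ge t b) :
    SameNF I a b ↔ SameNF J a b := by
  refine exists_congr fun w => ?_
  constructor
  · rintro ⟨haw, hbw, hw⟩
    have hw' := (normalForm_iff_of_restrict hJI hIJ (RwStar.ge_of_decreasing hI ha haw)).1 hw
    exact ⟨(rwStar_iff_of_restrict hI hJI hIJ ha).1 haw,
      (rwStar_iff_of_restrict hI hJI hIJ hb).1 hbw, hw'⟩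
  · rintro ⟨haw, hbw, hw⟩
    have haw' := (rwStar_iff_of_restrict hI hJI hIJ ha).2 haw
    exact ⟨haw', (rwStar_iff_of_restrict hI hJI hIJ hb).2 hbw,
      (normalForm_iff_of_restrict hJI hIJ (RwStar.ge_of_decreasing hI ha haw')).2 hw⟩

end Rewriting

theorem trueIn_congr {I J : Set (Trm F ar × Trm F ar)} {C : Clause F ar}
    (h : ∀ L ∈ C, SameNF I L.lhs L.rhs ↔ SameNF J L.lhs L.rhs) : TrueIn I C ↔ TrueIn J C :=
  exists_congr fun L => and_congr_right fun hL => by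
    split <;> simp only [h L hL]

section Model

variable {Sω : Set (PClause F ar)}

theorem interp_eq (l : Trm F ar) :
    Interp O sel Sω l =
      (letI := Classical.propDecidable
       if h : NormalForm (IPre O sel Sω l) l ∧
           ∃ rr, ProducesWith O sel Sω (IPre O sel Sω l) l rr then
         IPre O sel Sω l ∪ {(l, h.2.choose)}
       else IPre O sel Sω l) := by
  rw [Interp, WellFounded.fix_eq]
  rfl

theorem iPre_subset_interp (l : Trm F ar) : IPre O sel Sω l ⊆ Interp O sel Sω l := by
  rw [interp_eq]
  split
  · exact Set.subset_union_left
  · exact subset_rfl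

theorem interp_mono {l r : Trm F ar} (h : O.ge l r) : Interp O sel Sω r ⊆ Interp O sel Sω l := by
  rcases h with h | rfl
  · exact fun _ hab => iPre_subset_interp l (Set.mem_iUnion₂.2 ⟨r, h, hab⟩)
  · exact subset_rfl

theorem mem_interp_cases {l : Trm F ar} {lr : Trm F ar × Trm F ar} (h : lr ∈ Interp O sel Sω l) :
    lr ∈ IPre O sel Sω l ∨ (lr.1 = l ∧ O.gt l lr.2) := by
  rw [interp_eq] at h
  split at h
  · next hprod =>
      rcases h with h | rfl
      · exact Or.inl h
      · obtain ⟨_, _, _, _, _, _, _, _, _, hl, hgt, _, _, _, hrr⟩ := hprod.2.choose_spec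
        exact Or.inr ⟨rfl, hrr ▸ hl ▸ hgt⟩
  · exact Or.inl h

theorem mem_iPre {l : Trm F ar} {lr : Trm F ar × Trm F ar} :
    lr ∈ IPre O sel Sω l ↔ ∃ r, O.gt l r ∧ lr ∈ Interp O sel Sω r := by
  simp only [IPre, Set.mem_iUnion, exists_prop]

theorem interp_decreasing (l : Trm F ar) : Decreasing O (Interp O sel Sω l) := by
  induction l using O.wf.induction with
  | _ l ih =>
    intro lr hlr
    rcases mem_interp_cases hlr with h | ⟨rfl, h⟩
    · obtain ⟨r, hr, hlr⟩ := mem_iPre.1 h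
      exact ih r hr lr hlr
    · exact h

theorem mem_interp_iff {l : Trm F ar} {lr : Trm F ar × Trm F ar} :
    lr ∈ Interp O sel Sω l ↔ O.ge l lr.1 ∧ lr ∈ Interp O sel Sω lr.1 := by
  refine ⟨fun hlr => ?_, fun ⟨hl, hlr⟩ => interp_mono hl hlr⟩
  induction l using O.wf.induction with
  | _ l ih =>
    rcases mem_interp_cases hlr with h | ⟨hl, -⟩
    · obtain ⟨r, hr, hlr⟩ := mem_iPre.1 h
      obtain ⟨hge, hmem⟩ := ih r hr hlr
      exact ⟨O.ge_trans (Or.inl hr) hge, hmem⟩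
    · exact ⟨Or.inr hl.symm, hl ▸ hlr⟩

theorem sameNF_interp_iff {s t a b : Trm F ar} (hst : O.gt s t) (ha : O.ge t a) (hb : O.ge t b) :
    SameNF (Interp O sel Sω s) a b ↔ SameNF (Interp O sel Sω t) a b := by
  refine sameNF_iff_of_restrict (interp_decreasing s) (interp_mono (Or.inl hst)) ?_ ha hb
  intro lr hlr ht
  exact interp_mono ht (mem_interp_iff.1 hlr).2

end Model

theorem trueIn_Is_iff_It_general {F : Type} {ar : F → ℕ}
    (O : SimpOrd F ar) (sel : SelFun F ar O) (𝕊 : Saturation O sel)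
    (s t : Trm F ar) (hst : O.gt s t)
    (C : Clause F ar)
    (hdom : ∀ u : Trm F ar, OccursIn u C → O.gt t u ∨ t = u) :
    (TrueIn (Interp O sel 𝕊.Somega s) C ↔ TrueIn (Interp O sel 𝕊.Somega t) C) :=
  trueIn_congr fun L hL => sameNF_interp_iff hst
    (hdom L.lhs ⟨L, hL, [], Or.inl (Trm.atPos_nil _)⟩)
    (hdom L.rhs ⟨L, hL, [], Or.inr (Trm.atPos_nil _)⟩)

/-- If `s ≻ t` are ground terms and every term occurring in the
ground clause `C` is `⪯ t`, then `I_s ⊨ C` iff `I_t ⊨ C`. -/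
theorem trueIn_Is_iff_It {F : Type} {ar : F → ℕ} (hF : Finite F) (hconst : ∃ c : F, ar c = 0)
    (O : SimpOrd F ar) (sel : SelFun F ar O) (𝕊 : Saturation O sel)
    (s t : Trm F ar) (hs : s.IsGround) (ht : t.IsGround) (hst : O.gt s t)
    (C : Clause F ar) (hC : Clause.IsGround C)
    (hdom : ∀ u : Trm F ar, OccursIn u C → O.gt t u ∨ t = u) :
    (TrueIn (Interp O sel 𝕊.Somega s) C ↔ TrueIn (Interp O sel 𝕊.Somega t) C) :=
  trueIn_Is_iff_It_general O sel 𝕊 s t hst C hdom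

end PaRC
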